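/- arXiv:2310.12735 — 2 statements merged into one kernel-verified Lean document; each statement's English description precedes it below -/
import Mathlib

section
/- Let a>b>0 and q=b²/a². For each n, consider the probability measure on DWBC configurations of the n×n square supported on configurations with the minimal value N₅(σ)+N₆(σ)=n, with probabilities proportional to a^{N₁(σ)+N₂(σ)} b^{N₃(σ)+N₄(σ)} (this is the weak limit as ε→0 of the Gibbs measures with weights (a,b,ε)), and let (λ_i^j) be its random monotone triangle. Then for every fixed k≥1 and every injective tuple (m₁,…,m_k) of positive integers, lim_{n→∞} Prob( for every 1≤j≤k, (λ_1^j,…,λ_j^j) is the increasing rearrangement of (m₁,…,m_j) ) = ∏_{i=1}^k (1−q)·q^{ξ_i−1}, where ξ_i is the position of m_i in the increasing enumeration of ℤ_{>0}∖{m₁,…,m_{i−1}}. Equivalently, for every fixed k the triangle (λ_i^j)_{1≤i≤j≤k} converges in distribution to the triangle whose j-th row is the increasing rearrangement of (τ(1),…,τ(j)), where τ:ℤ_{>0}→ℤ_{>0} is the q-exchangeable random bijection built from i.i.d. Geometric(q) variables (Prob(ξ=k)=(1−q)q^{k−1}). -/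
open scoped BigOperators Classical
open Filter MeasureTheory Topology

namespace SixV


/-- Edge occupations for the six-vertex model on the `n × n` square:
`σ.1 x j` is the occupation of the horizontal edge between `(x, j+1)` and `(x+1, j+1)`
(i.e. `H(x, j+1)` for `x ∈ {0,…,n}`), and `σ.2 i y` is the occupation of the vertical
edge `V(i+1, y)` for `y ∈ {0,…,n}`. -/
abbrev Config (n : ℕ) := (Fin (n + 1) → Fin n → Bool) × (Fin n → Fin (n + 1) → Bool)

def b2n (b : Bool) : ℕ := if b then 1 else 0

/-- Domain Wall Boundary Conditions together with the ice rule (conservation law). -/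
def IsDWBC {n : ℕ} (σ : Config n) : Prop :=
  (∀ i j : Fin n,
      b2n (σ.1 i.castSucc j) + b2n (σ.2 i j.castSucc)
        = b2n (σ.1 i.succ j) + b2n (σ.2 i j.succ)) ∧
  (∀ j : Fin n, σ.1 0 j = true) ∧
  (∀ j : Fin n, σ.1 (Fin.last n) j = false) ∧
  (∀ i : Fin n, σ.2 i 0 = false) ∧
  (∀ i : Fin n, σ.2 i (Fin.last n) = true)

abbrev DWBC (n : ℕ) := {σ : Config n // IsDWBC σ}

noncomputable instance instFintypeDWBC (n : ℕ) : Fintype (DWBC n) := Fintype.ofFinite _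

/-- Vertex type from quadruple (H(x−1,y), V(x,y−1), H(x,y), V(x,y)). -/
def vtype : Bool → Bool → Bool → Bool → ℕ
  | false, false, false, false => 1
  | true,  true,  true,  true  => 2
  | true,  false, true,  false => 3
  | false, true,  false, true  => 4
  | true,  false, false, true  => 5
  | false, true,  true,  false => 6
  | _, _, _, _ => 0

/-- Type of the vertex at `(i+1, j+1)`. -/
def vertexType {n : ℕ} (σ : Config n) (i j : Fin n) : ℕ :=
  vtype (σ.1 i.castSucc j) (σ.2 i j.castSucc) (σ.1 i.succ j) (σ.2 i j.succ)

/-- `Ncount σ t` is the number of vertices of Type `t`. -/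
noncomputable def Ncount {n : ℕ} (σ : Config n) (ty : ℕ) : ℕ :=
  (Finset.univ.filter fun p : Fin n × Fin n => vertexType σ p.1 p.2 = ty).card

/-- The weight `a^(N₁+N₂) b^(N₃+N₄) c^(N₅+N₆)`. -/
noncomputable def wtABC {n : ℕ} (a b c : ℝ) (σ : Config n) : ℝ :=
  a ^ (Ncount σ 1 + Ncount σ 2) * b ^ (Ncount σ 3 + Ncount σ 4)
    * c ^ (Ncount σ 5 + Ncount σ 6)

/-- Gibbs probability of a DWBC configuration. -/
noncomputable def gibbs (n : ℕ) (a b c : ℝ) (σ : DWBC n) : ℝ :=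
  wtABC a b c σ.1 / ∑ σ' : DWBC n, wtABC a b c σ'.1

/-- Columns `x ∈ {1,…,n}` with `V(x, j) = 1`. -/
noncomputable def rowFinset {n : ℕ} (σ : DWBC n) (j : ℕ) : Finset ℕ :=
  if h : j ≤ n then
    (Finset.univ.filter fun x : Fin n => σ.1.2 x ⟨j, Nat.lt_succ_of_le h⟩ = true).image
      fun x : Fin n => (x : ℕ) + 1
  else ∅

/-- The monotone triangle: `lam σ i j` is the `i`-th smallest column with `V(·, j) = 1`. -/
noncomputable def lam {n : ℕ} (σ : DWBC n) (i j : ℕ) : ℕ :=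
  ((rowFinset σ j).sort (· ≤ ·)).getD (i - 1) 0


/-- Weight of the `c → 0` degeneration: it is supported on configurations with the minimal
number `n` of type `c` vertices, with weight `a^{N₁+N₂} b^{N₃+N₄}`. -/
noncomputable def wt0 {n : ℕ} (a b : ℝ) (σ : Config n) : ℝ :=
  if Ncount σ 5 + Ncount σ 6 = n then
    a ^ (Ncount σ 1 + Ncount σ 2) * b ^ (Ncount σ 3 + Ncount σ 4)
  else 0

/-- Probability of a DWBC configuration under the `c → 0` limit of the Gibbs measures. -/
noncomputable def gibbs0 (n : ℕ) (a b : ℝ) (σ : DWBC n) : ℝ :=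
  wt0 a b σ.1 / ∑ σ' : DWBC n, wt0 a b σ'.1

/-- `xi m i` is the position of `m i` in the increasing enumeration of
`ℤ_{>0} ∖ {m 1, …, m (i−1)}`. -/
noncomputable def xi (m : ℕ → ℕ) (i : ℕ) : ℕ :=
  ((Finset.Icc 1 (m i)).filter fun x => ∀ l ∈ Finset.Ico 1 i, m l ≠ x).card

/-!
Every row of a DWBC configuration turns at least once (a vertex of type 5 or 6), so
`N₅ + N₆ = n` forces exactly one turn per row. The ice rule then makes the turning columns a
permutation `π`, the configuration is `permConfig π`, and its weight is
`a^{2·noninv π} b^{2·inv π} ∝ q^{inv π}`: the `c → 0` measure is the Mallows measure on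
`Perm (Fin n)`, and the event of the theorem becomes `π i = m (i + 1) - 1` for `i < k`.
Choosing `π 0` first and then a permutation of the remaining values adds `π 0` inversions, so the
`q`-weight of the permutations with a prescribed prefix is `q^{Σ lehmer} · mahonian q (n - k)`,
where `mahonian q n = ∏_{i<n} (1 + q + ⋯ + q^i)` and the Lehmer code entries are the `ξ_i - 1`.
Finally `mahonian q (n - k) / mahonian q n → (1 - q)^k`.
-/

open Finset

/-! ### Permutation configurations -/

def permConfig {n : ℕ} (π : Equiv.Perm (Fin n)) : Config n :=
  (fun x j => decide ((x : ℕ) ≤ π j), fun i y => decide ((π.symm i : ℕ) < y))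

lemma permConfig_isDWBC {n : ℕ} (π : Equiv.Perm (Fin n)) : IsDWBC (permConfig π) := by
  refine ⟨fun i j => ?_, fun j => by simp [permConfig], fun j => by simp [permConfig],
    fun i => by simp [permConfig], fun i => by simp [permConfig]⟩
  have h : (i : ℕ) = π j ↔ (π.symm i : ℕ) = j := by
    rw [← Fin.ext_iff, ← Fin.ext_iff, Equiv.symm_apply_eq, eq_comm]
  simp only [permConfig, b2n, Fin.val_castSucc, Fin.val_succ, decide_eq_true_eq]
  split_ifs <;> omega

lemma permConfig_injective {n : ℕ} : Function.Injective (permConfig (n := n)) :=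
  fun π₁ π₂ h => Equiv.ext fun j => by
    have h₁ := congrFun (congrFun (congrArg Prod.fst h) (π₁ j).castSucc) j
    have h₂ := congrFun (congrFun (congrArg Prod.fst h) (π₂ j).castSucc) j
    simp only [permConfig, Fin.val_castSucc, le_refl, decide_true] at h₁ h₂
    exact Fin.ext (le_antisymm (of_decide_eq_true h₁.symm) (of_decide_eq_true h₂))

def permDWBC {n : ℕ} (π : Equiv.Perm (Fin n)) : DWBC n := ⟨permConfig π, permConfig_isDWBC π⟩

@[simp] lemma permDWBC_val {n : ℕ} (π : Equiv.Perm (Fin n)) : (permDWBC π).1 = permConfig π :=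
  rfl

def invCount {n : ℕ} (π : Equiv.Perm (Fin n)) : ℕ :=
  #{p : Fin n × Fin n | p.1 < p.2 ∧ π p.2 < π p.1}

def nonInvCount {n : ℕ} (π : Equiv.Perm (Fin n)) : ℕ :=
  #{p : Fin n × Fin n | p.1 < p.2 ∧ π p.1 < π p.2}

lemma invCount_add_nonInvCount {n : ℕ} (π : Equiv.Perm (Fin n)) :
    invCount π + nonInvCount π = #{p : Fin n × Fin n | p.1 < p.2} := by
  rw [invCount, nonInvCount, ← filter_filter, ← filter_filter, add_comm,
    ← card_filter_add_card_filter_not (s := {p : Fin n × Fin n | p.1 < p.2})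
      (p := fun p => π p.1 < π p.2)]
  congr 2
  refine filter_congr fun p hp => ?_
  have hne : π p.1 ≠ π p.2 := π.injective.ne (mem_filter.mp hp).2.ne
  rw [not_lt]
  exact ⟨le_of_lt, fun h => h.lt_of_ne hne.symm⟩

lemma card_filter_swap {α : Type*} [Fintype α] (P : α → α → Prop) [DecidableRel P] :
    #{p : α × α | P p.2 p.1} = #{p : α × α | P p.1 p.2} :=
  card_equiv (Equiv.prodComm α α) (by simp)

lemma vertexType_permConfig {n : ℕ} (π : Equiv.Perm (Fin n)) (i j : Fin n) :
    vertexType (permConfig π) (π i) j =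
      if i = j then 5
      else if π i < π j then (if i < j then 2 else 3) else (if i < j then 4 else 1) := by
  rcases eq_or_ne i j with rfl | hij
  · simp [vertexType, permConfig, vtype]
  have hπ : π i ≠ π j := π.injective.ne hij
  simp only [vertexType, permConfig, Fin.val_castSucc, Fin.val_succ, Equiv.symm_apply_apply,
    if_neg hij, Fin.lt_def, Nat.add_one_le_iff, Nat.lt_add_one_iff]
  rw [Ne, Fin.ext_iff] at hij hπ
  rcases Nat.lt_or_gt_of_ne hij with h | h <;>
  rcases Nat.lt_or_gt_of_ne hπ with h' | h' <;>
  simp [h, h', h.le, h'.le, h.not_gt, h'.not_gt, h.not_ge, h'.not_ge, vtype]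

section permConfig
variable {n : ℕ} (π : Equiv.Perm (Fin n))

lemma Ncount_permConfig_eq_card_filter (t : ℕ) (P : Fin n → Fin n → Prop) [DecidableRel P]
    (hP : ∀ i j, (π i = π j ↔ i = j) →
      ((if i = j then 5
        else if π i < π j then (if i < j then 2 else 3) else (if i < j then 4 else 1)) = t ↔
        P i j)) :
    Ncount (permConfig π) t = #{p : Fin n × Fin n | P p.1 p.2} := by
  refine card_equiv ((π.prodCongr (Equiv.refl _)).symm) fun ⟨x, j⟩ => ?_
  obtain ⟨i, rfl⟩ := π.surjective x
  simpa [vertexType_permConfig] using hP i j π.injective.eq_iff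

lemma Ncount_five_permConfig : Ncount (permConfig π) 5 = n := by
  rw [Ncount_permConfig_eq_card_filter π 5 (· = ·) fun _ _ _ => by split_ifs <;> omega]
  calc #{p : Fin n × Fin n | p.1 = p.2} = #(univ : Finset (Fin n)).diag :=
        card_equiv (Equiv.refl _) (by simp [mem_diag])
    _ = n := by simp

lemma Ncount_six_permConfig : Ncount (permConfig π) 6 = 0 := by
  rw [Ncount_permConfig_eq_card_filter π 6 (fun _ _ => False) fun _ _ _ => by split_ifs <;> simp]
  simp

lemma Ncount_one_add_two_permConfig :
    Ncount (permConfig π) 1 + Ncount (permConfig π) 2 = 2 * nonInvCount π := by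
  rw [Ncount_permConfig_eq_card_filter π 1 (fun i j => j < i ∧ π j < π i) fun _ _ _ => by
      split_ifs <;> omega,
    Ncount_permConfig_eq_card_filter π 2 (fun i j => i < j ∧ π i < π j) fun _ _ _ => by
      split_ifs <;> omega,
    card_filter_swap (fun i j => i < j ∧ π i < π j), nonInvCount, two_mul]

lemma Ncount_three_add_four_permConfig :
    Ncount (permConfig π) 3 + Ncount (permConfig π) 4 = 2 * invCount π := by
  rw [Ncount_permConfig_eq_card_filter π 3 (fun i j => j < i ∧ π i < π j) fun _ _ _ => by
      split_ifs <;> omega,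
    Ncount_permConfig_eq_card_filter π 4 (fun i j => i < j ∧ π j < π i) fun _ _ _ => by
      split_ifs <;> omega,
    card_filter_swap (fun i j => i < j ∧ π j < π i), invCount, two_mul]

lemma wt0_permConfig (a b : ℝ) (ha : a ≠ 0) :
    wt0 a b (permConfig π) =
      (a ^ 2) ^ #{p : Fin n × Fin n | p.1 < p.2} * (b ^ 2 / a ^ 2) ^ invCount π := by
  rw [wt0, if_pos (by rw [Ncount_five_permConfig, Ncount_six_permConfig, add_zero]),
    Ncount_one_add_two_permConfig, Ncount_three_add_four_permConfig,
    ← invCount_add_nonInvCount, pow_mul, pow_mul, pow_add, div_pow]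
  field_simp

end permConfig

/-! ### Configurations with `N₅ + N₆ = n` -/

lemma b2n_injective : Function.Injective b2n := by
  intro x y; cases x <;> cases y <;> simp [b2n]

lemma DWBC.ext_of_fst {n : ℕ} {σ τ : DWBC n} (h : σ.1.1 = τ.1.1) : σ = τ := by
  refine Subtype.ext (Prod.ext h (funext fun i => funext fun y => ?_))
  induction y using Fin.induction with
  | zero => rw [σ.2.2.2.2.1, τ.2.2.2.2.1]
  | succ y ih =>
    have hσ := σ.2.1 i y
    have hτ := τ.2.1 i y
    rw [h, ih] at hσ
    exact b2n_injective (by omega)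

def turns {n : ℕ} (σ : Config n) (j : Fin n) : Finset (Fin n) :=
  {i | σ.1 i.castSucc j ≠ σ.1 i.succ j}

lemma vtype_eq_five_or_six_iff {h₁ v₁ h₂ v₂ : Bool}
    (hice : b2n h₁ + b2n v₁ = b2n h₂ + b2n v₂) :
    (vtype h₁ v₁ h₂ v₂ = 5 ∨ vtype h₁ v₁ h₂ v₂ = 6) ↔ h₁ ≠ h₂ := by
  revert hice; cases h₁ <;> cases v₁ <;> cases h₂ <;> cases v₂ <;> decide

lemma sum_card_turns {n : ℕ} (σ : DWBC n) :
    ∑ j, #(turns σ.1 j) = Ncount σ.1 5 + Ncount σ.1 6 := by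
  rw [Ncount, Ncount, ← card_union_of_disjoint (disjoint_filter.mpr fun _ _ h => by omega),
    ← filter_or, card_eq_sum_card_fiberwise (f := Prod.snd) (t := univ) (by simp)]
  refine sum_congr rfl fun j _ => ?_
  rw [← card_map ⟨fun i => (i, j), fun _ _ h => (Prod.ext_iff.mp h).1⟩]
  congr 1
  ext ⟨i, j'⟩
  rw [Finset.mem_filter, Finset.mem_filter]
  simp only [Finset.mem_map, turns, mem_filter, mem_univ, true_and, vertexType,
    vtype_eq_five_or_six_iff (σ.2.1 i j')]
  constructor
  · rintro ⟨i, hi, ⟨⟩⟩; exact ⟨hi, rfl⟩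
  · rintro ⟨hi, rfl⟩; exact ⟨i, hi, rfl⟩

lemma turns_nonempty {n : ℕ} (σ : DWBC n) (j : Fin n) : (turns σ.1 j).Nonempty := by
  by_contra h
  rw [not_nonempty_iff_eq_empty, turns, filter_eq_empty_iff] at h
  have hrow : ∀ x : Fin (n + 1), σ.1.1 x j = true := by
    intro x
    induction x using Fin.induction with
    | zero => exact σ.2.2.1 j
    | succ i ih => simpa [ih] using h (mem_univ i)
  simpa [σ.2.2.2.1 j] using hrow (Fin.last n)

lemma card_turns_eq_one {n : ℕ} (σ : DWBC n) (h : Ncount σ.1 5 + Ncount σ.1 6 = n)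
    (j : Fin n) :
    #(turns σ.1 j) = 1 := by
  have hpos : ∀ j', 1 ≤ #(turns σ.1 j') := fun j' => card_pos.mpr (turns_nonempty σ j')
  refine le_antisymm (not_lt.mp fun hlt => ?_) (hpos j)
  have := sum_lt_sum (fun j' _ => hpos j') ⟨j, mem_univ j, hlt⟩
  simp [sum_card_turns, h] at this

lemma eq_decide_le_of_turn {n : ℕ} {f : Fin (n + 1) → Bool} {x : Fin n} (h0 : f 0 = true)
    (hx : ∀ i : Fin n, f i.castSucc ≠ f i.succ ↔ i = x) (y : Fin (n + 1)) :
    f y = decide ((y : ℕ) ≤ x) := by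
  induction y using Fin.induction with
  | zero => simp [h0]
  | succ i ih =>
    by_cases hi : i = x
    · subst hi
      have := (hx i).mpr rfl
      simp only [Fin.val_castSucc, le_refl, decide_true] at ih
      simpa [ih] using this
    · have hstep : f i.castSucc = f i.succ := not_not.mp fun h => hi ((hx i).mp h)
      have hne : (i : ℕ) ≠ x := fun h => hi (Fin.ext h)
      rw [← hstep, ih, Fin.val_castSucc, Fin.val_succ, decide_eq_decide]
      omega

lemma exists_mem_turns {n : ℕ} (σ : DWBC n) (i : Fin n) : ∃ j, i ∈ turns σ.1 j := by
  by_contra! h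
  have hcol : ∀ y, σ.1.2 i y = false := by
    intro y
    induction y using Fin.induction with
    | zero => exact σ.2.2.2.2.1 i
    | succ y ih =>
      have hice := σ.2.1 i y
      have hH : σ.1.1 i.castSucc y = σ.1.1 i.succ y := by simpa [turns] using h y
      rw [hH, ih] at hice
      exact b2n_injective (by simpa [b2n] using hice.symm)
  simpa [σ.2.2.2.2.2 i] using hcol (Fin.last n)

lemma exists_permConfig_eq {n : ℕ} (σ : DWBC n) (h : Ncount σ.1 5 + Ncount σ.1 6 = n) :
    ∃ π : Equiv.Perm (Fin n), permConfig π = σ.1 := by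
  choose x hx using fun j => card_eq_one.mp (card_turns_eq_one σ h j)
  have hturn : ∀ i j, i ∈ turns σ.1 j ↔ i = x j := fun i j => by rw [hx j, mem_singleton]
  have hbij : Function.Bijective x := Finite.surjective_iff_bijective.mp fun i =>
    (exists_mem_turns σ i).imp fun j hj => ((hturn i j).mp hj).symm
  refine ⟨Equiv.ofBijective x hbij, congrArg Subtype.val
    (DWBC.ext_of_fst (σ := ⟨_, permConfig_isDWBC _⟩) (τ := σ) ?_)⟩
  funext y j
  refine (eq_decide_le_of_turn (f := fun y => σ.1.1 y j) (σ.2.2.1 j) (fun i => ?_) y).symm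
  simpa [turns] using hturn i j

lemma sum_DWBC_eq_sum_perm {n : ℕ} {M : Type*} [AddCommMonoid M] (f : DWBC n → M)
    (hf : ∀ σ : DWBC n, Ncount σ.1 5 + Ncount σ.1 6 ≠ n → f σ = 0) :
    ∑ σ, f σ = ∑ π : Equiv.Perm (Fin n), f (permDWBC π) := by
  rw [← sum_image fun π _ π' _ h => permConfig_injective (congrArg Subtype.val h)]
  refine (sum_subset (subset_univ _) fun σ _ hσ => hf σ fun h => hσ ?_).symm
  obtain ⟨π, hπ⟩ := exists_permConfig_eq σ h
  exact mem_image.mpr ⟨π, mem_univ _, Subtype.ext hπ⟩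

/-! ### Mahonian sums -/

lemma invCount_eq_sum {n : ℕ} (π : Equiv.Perm (Fin n)) :
    invCount π = ∑ i, #{j | i < j ∧ π j < π i} := by
  simp only [invCount, card_filter, Fintype.sum_prod_type]

/-- The permutation sending `0 ↦ p` and `j + 1 ↦ p.succAbove (e j)`. -/
def insPerm {n : ℕ} (p : Fin (n + 1)) (e : Equiv.Perm (Fin n)) : Equiv.Perm (Fin (n + 1)) :=
  p.cycleRange.symm * Equiv.Perm.decomposeFin.symm (0, e)

section insPerm
variable {n : ℕ} (p : Fin (n + 1)) (e : Equiv.Perm (Fin n))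

@[simp] lemma insPerm_zero : insPerm p e 0 = p := by
  simp [insPerm, Fin.cycleRange_symm_zero]

@[simp] lemma insPerm_succ (j : Fin n) : insPerm p e j.succ = p.succAbove (e j) := by
  simp [insPerm, Fin.cycleRange_symm_succ]

lemma insPerm_bijective :
    Function.Bijective fun pe : Fin (n + 1) × Equiv.Perm (Fin n) => insPerm pe.1 pe.2 := by
  refine (Fintype.bijective_iff_injective_and_card _).mpr ⟨?_, ?_⟩
  · rintro ⟨p, e⟩ ⟨p', e'⟩ h
    obtain rfl : p = p' := by simpa using congrArg (· 0) h
    refine Prod.ext rfl (Equiv.ext fun j => Fin.succAbove_right_injective (p := p) ?_)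
    simpa using congrArg (· j.succ) h
  · simp [Fintype.card_perm, Nat.factorial_succ]

lemma sum_perm_succ {M : Type*} [AddCommMonoid M] (f : Equiv.Perm (Fin (n + 1)) → M) :
    ∑ π, f π = ∑ p, ∑ e, f (insPerm p e) := by
  rw [← Fintype.sum_prod_type', Fintype.sum_bijective _ insPerm_bijective _ _ fun _ => rfl]

lemma invCount_insPerm : invCount (insPerm p e) = p + invCount e := by
  rw [invCount_eq_sum, invCount_eq_sum, Fin.sum_univ_succ]
  congr 1
  · rw [Fin.card_filter_univ_succ']
    simp only [lt_self_iff_false, false_and, if_false, zero_add, Fin.succ_pos, true_and,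
      insPerm_zero, insPerm_succ, Fin.succAbove_lt_iff_castSucc_lt]
    rw [card_equiv e (t := {y : Fin n | (y : ℕ) < p}) (by simp [Fin.lt_def]),
      Fin.card_filter_val_lt]
    exact min_eq_right (Nat.lt_succ_iff.mp p.isLt)
  · refine sum_congr rfl fun i _ => ?_
    rw [Fin.card_filter_univ_succ']
    simp [Fin.succAbove_lt_succAbove_iff]

end insPerm

def collapse (c x : ℕ) : ℕ := if x < c then x else x - 1

lemma val_succAbove_eq_iff {n : ℕ} (p : Fin (n + 1)) (y : Fin n) {x : ℕ} (hx : x ≠ p) :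
    (p.succAbove y : ℕ) = x ↔ (y : ℕ) = collapse p x := by
  unfold Fin.succAbove collapse
  split_ifs <;> simp only [Fin.lt_def, Fin.val_castSucc, Fin.val_succ] at * <;> omega

lemma insPerm_prefix_iff {n k : ℕ} (p : Fin (n + 1)) (e : Equiv.Perm (Fin n)) {v : ℕ → ℕ}
    (hv : ∀ i < k, v (i + 1) ≠ v 0) :
    (∀ i : Fin (n + 1), (i : ℕ) < k + 1 → (insPerm p e i : ℕ) = v i) ↔
      (p : ℕ) = v 0 ∧ ∀ j : Fin n, (j : ℕ) < k → (e j : ℕ) = collapse (v 0) (v (j + 1)) := by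
  simp only [Fin.forall_fin_succ, Fin.val_zero, insPerm_zero, Fin.val_succ, insPerm_succ,
    Nat.zero_lt_succ, true_implies, Nat.add_lt_add_iff_right]
  refine and_congr_right fun hp => forall_congr' fun j => imp_congr_right fun hj => ?_
  rw [← hp, val_succAbove_eq_iff]
  exact hp ▸ hv j hj

def lehmer (v : ℕ → ℕ) (i : ℕ) : ℕ := #{x ∈ range (v i) | ∀ l < i, v l ≠ x}

lemma lehmer_zero (v : ℕ → ℕ) : lehmer v 0 = v 0 := by simp [lehmer]

lemma lehmer_collapse {v : ℕ → ℕ} {i : ℕ} (hv : ∀ l ≤ i, v (l + 1) ≠ v 0) :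
    lehmer (fun j => collapse (v 0) (v (j + 1))) i = lehmer v (i + 1) := by
  have hvi := hv i le_rfl
  refine card_nbij' (fun y => if y < v 0 then y else y + 1) (collapse (v 0)) ?_ ?_ ?_ ?_ <;>
    intro y hy <;>
    simp only [mem_coe, mem_filter, mem_range, Nat.forall_lt_succ_left] at hy ⊢ <;>
    simp only [collapse] at hy ⊢
  · refine ⟨by split_ifs at hy ⊢ <;> omega, by split_ifs <;> omega, fun l hl => ?_⟩
    have := hy.2 l hl
    have := hv l hl.le
    split_ifs at * <;> omega
  · refine ⟨by split_ifs <;> omega, fun l hl => ?_⟩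
    have := hy.2.2 l hl
    have := hv l hl.le
    split_ifs <;> omega
  · split_ifs <;> omega
  · split_ifs <;> omega

section mahonian
variable {R : Type*} [CommSemiring R] (q : R)

def mahonian (n : ℕ) : R := ∑ π : Equiv.Perm (Fin n), q ^ invCount π

def prefixMahonian (n k : ℕ) (v : ℕ → ℕ) : R :=
  ∑ π : Equiv.Perm (Fin n),
    if ∀ i : Fin n, (i : ℕ) < k → (π i : ℕ) = v i then q ^ invCount π else 0

lemma prefixMahonian_zero (n : ℕ) (v : ℕ → ℕ) : prefixMahonian q n 0 v = mahonian q n := by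
  simp [prefixMahonian, mahonian]

lemma mahonian_succ (n : ℕ) :
    mahonian q (n + 1) = (∑ x ∈ range (n + 1), q ^ x) * mahonian q n := by
  simp_rw [mahonian, sum_perm_succ, invCount_insPerm, pow_add, ← mul_sum, ← sum_mul,
    Fin.sum_univ_eq_sum_range (q ^ ·)]

lemma mahonian_eq_prod (n : ℕ) : mahonian q n = ∏ i ∈ range n, ∑ x ∈ range (i + 1), q ^ x := by
  induction n with
  | zero => simp [mahonian, invCount]
  | succ n ih => rw [mahonian_succ, ih, prod_range_succ, mul_comm]

lemma prefixMahonian_succ {n k : ℕ} {v : ℕ → ℕ}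
    (hv0 : v 0 ≤ n) (hv : ∀ i < k, v (i + 1) ≠ v 0) :
    prefixMahonian q (n + 1) (k + 1) v =
      q ^ v 0 * prefixMahonian q n k fun j => collapse (v 0) (v (j + 1)) := by
  rw [prefixMahonian, sum_perm_succ, Fintype.sum_eq_single ⟨v 0, Nat.lt_succ_of_le hv0⟩]
  · rw [prefixMahonian, mul_sum]
    refine sum_congr rfl fun e _ => ?_
    simp only [insPerm_prefix_iff _ _ hv, invCount_insPerm, pow_add, true_and, mul_ite,
      mul_zero]
  · intro p hp
    refine sum_eq_zero fun e _ => if_neg ?_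
    rw [insPerm_prefix_iff _ _ hv]
    exact fun h => hp (Fin.ext h.1)

lemma prefixMahonian_eq {k n : ℕ} {v : ℕ → ℕ}
    (hkn : k ≤ n) (hv : ∀ i < k, v i < n) (hinj : ∀ i < k, ∀ j < k, v i = v j → i = j) :
    prefixMahonian q n k v = q ^ (∑ i ∈ range k, lehmer v i) * mahonian q (n - k) := by
  induction k generalizing n v with
  | zero => simp [prefixMahonian_zero]
  | succ k ih =>
    obtain ⟨n, rfl⟩ : ∃ n', n = n' + 1 := ⟨n - 1, by omega⟩
    have hv0 : v 0 ≤ n := Nat.lt_succ_iff.mp (hv 0 k.succ_pos)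
    have hne : ∀ i < k, v (i + 1) ≠ v 0 := fun i hi h => by
      have := hinj (i + 1) (by omega) 0 k.succ_pos h
      omega
    have hv' : ∀ i < k, collapse (v 0) (v (i + 1)) < n := fun i hi => by
      have := hv (i + 1) (by omega)
      have := hne i hi
      unfold collapse
      split_ifs <;> omega
    have hinj' : ∀ i < k, ∀ j < k,
        collapse (v 0) (v (i + 1)) = collapse (v 0) (v (j + 1)) → i = j := fun i hi j hj h => by
      have := hne i hi
      have := hne j hj
      have := hinj (i + 1) (by omega) (j + 1) (by omega)
      unfold collapse at h
      split_ifs at h <;> omega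
    rw [prefixMahonian_succ q hv0 hne, ih (by omega) hv' hinj', sum_range_succ', lehmer_zero,
      sum_congr rfl fun i hi => lehmer_collapse fun l hl => hne l (hl.trans_lt (mem_range.mp hi)),
      Nat.add_sub_add_right, pow_add, mul_assoc, mul_left_comm]

end mahonian

lemma mahonian_pos {q : ℝ} (hq : 0 ≤ q) (n : ℕ) : 0 < mahonian q n := by
  rw [mahonian_eq_prod]
  exact prod_pos fun i _ => geom_sum_pos hq i.succ_ne_zero

lemma mahonian_sub_div_mahonian {q : ℝ} (hq : 0 ≤ q) {k n : ℕ} (hkn : k ≤ n) :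
    mahonian q (n - k) / mahonian q n =
      ∏ j ∈ range k, (∑ x ∈ range (n - k + j + 1), q ^ x)⁻¹ := by
  rw [mahonian_eq_prod q n, ← prod_range_mul_prod_Ico _ (Nat.sub_le n k), ← mahonian_eq_prod,
    div_mul_cancel_left₀ (mahonian_pos hq _).ne', prod_Ico_eq_prod_range,
    Nat.sub_sub_self hkn, prod_inv_distrib]

lemma tendsto_mahonian_sub_div_mahonian {q : ℝ} (hq0 : 0 ≤ q) (hq1 : q < 1) (k : ℕ) :
    Tendsto (fun n => mahonian q (n - k) / mahonian q n) atTop (𝓝 ((1 - q) ^ k)) := by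
  have hgeom : Tendsto (fun m => ∑ x ∈ range m, q ^ x) atTop (𝓝 (1 - q)⁻¹) :=
    (hasSum_geometric_of_lt_one hq0 hq1).tendsto_sum_nat
  have hfactor (j : ℕ) :
      Tendsto (fun n => (∑ x ∈ range (n - k + j + 1), q ^ x)⁻¹) atTop (𝓝 (1 - q)) := by
    have hshift : Tendsto (fun n => n - k + j + 1) atTop atTop :=
      tendsto_atTop_atTop.mpr fun b => ⟨b + k, fun n hn => by omega⟩
    simpa using (hgeom.comp hshift).inv₀ (inv_ne_zero (sub_pos.mpr hq1).ne')
  rw [show (1 - q) ^ k = ∏ _j ∈ range k, (1 - q) by simp]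
  refine (tendsto_finsetProd _ fun j _ => hfactor j).congr' ?_
  filter_upwards [eventually_ge_atTop k] with n hn
  exact (mahonian_sub_div_mahonian hq0 hn).symm

lemma sum_ite_gibbs0 {n : ℕ} {a : ℝ} (b : ℝ) (ha : a ≠ 0) (E : DWBC n → Prop)
    [DecidablePred E] :
    ∑ σ, (if E σ then gibbs0 n a b σ else 0) =
      (∑ π, if E (permDWBC π) then (b ^ 2 / a ^ 2) ^ invCount π else 0) /
        mahonian (b ^ 2 / a ^ 2) n := by
  have hwt (σ : DWBC n) (h : Ncount σ.1 5 + Ncount σ.1 6 ≠ n) : wt0 a b σ.1 = 0 := if_neg h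
  calc ∑ σ, (if E σ then gibbs0 n a b σ else 0)
      = (∑ σ, if E σ then wt0 a b σ.1 else 0) / ∑ σ : DWBC n, wt0 a b σ.1 := by
        rw [sum_div]
        exact sum_congr rfl fun σ _ => by split_ifs <;> simp [gibbs0]
    _ = ((a ^ 2) ^ #{p : Fin n × Fin n | p.1 < p.2} *
          ∑ π, if E (permDWBC π) then (b ^ 2 / a ^ 2) ^ invCount π else 0) /
        ((a ^ 2) ^ #{p : Fin n × Fin n | p.1 < p.2} * mahonian (b ^ 2 / a ^ 2) n) := by
        rw [sum_DWBC_eq_sum_perm _ fun σ h => by simp [hwt σ h],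
          sum_DWBC_eq_sum_perm _ hwt, mahonian, mul_sum, mul_sum]
        simp only [permDWBC_val, wt0_permConfig _ _ _ ha, mul_ite, mul_zero]
    _ = _ := mul_div_mul_left _ _ (by positivity)

/-! ### Rows of permutation configurations -/

lemma rowFinset_permDWBC {n j : ℕ} (π : Equiv.Perm (Fin n)) (hj : j ≤ n) :
    rowFinset (permDWBC π) j =
      ({y : Fin n | (y : ℕ) < j} : Finset (Fin n)).image fun y => (π y : ℕ) + 1 := by
  rw [rowFinset, dif_pos hj]
  ext z
  simp only [mem_image, mem_filter, mem_univ, true_and, permDWBC_val, permConfig,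
    decide_eq_true_eq]
  constructor
  · rintro ⟨x, hx, rfl⟩
    exact ⟨π.symm x, hx, by simp⟩
  · rintro ⟨y, hy, rfl⟩
    exact ⟨π y, by simpa using hy, rfl⟩

lemma rowFinset_zero {n : ℕ} (σ : DWBC n) : rowFinset σ 0 = ∅ := by
  rw [rowFinset, dif_pos (Nat.zero_le n)]
  simp [σ.2.2.2.2.1]

lemma image_Icc_one_eq_image_range (m : ℕ → ℕ) (j : ℕ) :
    (Icc 1 j).image m = (range j).image fun i => m (i + 1) := by
  ext z
  simp only [mem_image, mem_Icc, mem_range]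
  constructor
  · rintro ⟨l, ⟨h1, h2⟩, rfl⟩
    exact ⟨l - 1, by omega, by rw [Nat.sub_add_cancel h1]⟩
  · rintro ⟨i, hi, rfl⟩
    exact ⟨i + 1, by omega, rfl⟩

lemma image_filter_lt_eq_image_range_iff {n k : ℕ} (hkn : k ≤ n) {f : Fin n → ℕ}
    (hf : Function.Injective f) (g : ℕ → ℕ) :
    (∀ j ≤ k, ({y : Fin n | (y : ℕ) < j} : Finset (Fin n)).image f = (range j).image g) ↔
      ∀ y : Fin n, (y : ℕ) < k → f y = g y := by
  constructor
  -- `f y` is in row `y + 1` but not in row `y`, so it is the new element `g y`.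
  · intro h y hy
    obtain ⟨l, hl, hfl⟩ := mem_image.mp <|
      h (y + 1) hy ▸ mem_image_of_mem f (by simp : y ∈ ({y' | (y' : ℕ) < y + 1} : Finset (Fin n)))
    rcases (Nat.lt_succ_iff.mp (mem_range.mp hl)).lt_or_eq with hl | rfl
    · obtain ⟨y', hy', hfy'⟩ := mem_image.mp <|
        (h y hy.le).symm ▸ mem_image_of_mem g (mem_range.mpr hl)
      cases hf (hfy'.trans hfl)
      simp at hy'
    · exact hfl.symm
  · intro h j hj
    ext z
    simp only [mem_image, mem_filter, mem_univ, true_and, mem_range]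
    constructor
    · rintro ⟨y, hy, rfl⟩
      exact ⟨y, hy, (h y (by omega)).symm⟩
    · rintro ⟨l, hl, rfl⟩
      exact ⟨⟨l, by omega⟩, hl, h _ (hl.trans_le hj)⟩

lemma rows_permDWBC_eq_image_iff {n k : ℕ} (hkn : k ≤ n) {m : ℕ → ℕ}
    (hpos : ∀ i, 1 ≤ i → i ≤ k → 1 ≤ m i) (π : Equiv.Perm (Fin n)) :
    (∀ j, 1 ≤ j → j ≤ k → rowFinset (permDWBC π) j = (Icc 1 j).image m) ↔
      ∀ i : Fin n, (i : ℕ) < k → (π i : ℕ) = m (i + 1) - 1 := by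
  calc (∀ j, 1 ≤ j → j ≤ k → rowFinset (permDWBC π) j = (Icc 1 j).image m)
      ↔ ∀ j ≤ k, rowFinset (permDWBC π) j = (Icc 1 j).image m :=
        ⟨fun h j hj => j.eq_zero_or_pos.elim (fun h0 => by simp [h0, rowFinset_zero]) (h j · hj),
          fun h j _ hj => h j hj⟩
    _ ↔ ∀ j ≤ k, ({y : Fin n | (y : ℕ) < j} : Finset (Fin n)).image (fun y => (π y : ℕ) + 1) =
          (range j).image fun i => m (i + 1) :=
        forall₂_congr fun j hj => by
          rw [rowFinset_permDWBC π (hj.trans hkn), image_Icc_one_eq_image_range]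
    _ ↔ ∀ i : Fin n, (i : ℕ) < k → (π i : ℕ) + 1 = m (i + 1) :=
        image_filter_lt_eq_image_range_iff hkn
          (fun y y' h => π.injective (Fin.ext (by simpa using h))) _
    _ ↔ ∀ i : Fin n, (i : ℕ) < k → (π i : ℕ) = m (i + 1) - 1 :=
        forall₂_congr fun i hi => by
          have := hpos (i + 1) (by omega) (by omega)
          omega

lemma xi_succ_eq_lehmer_add_one {m : ℕ → ℕ} {i : ℕ} (hpos : ∀ l ≤ i, 1 ≤ m (l + 1))
    (hne : ∀ l < i, m (l + 1) ≠ m (i + 1)) :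
    xi m (i + 1) = lehmer (fun l => m (l + 1) - 1) i + 1 := by
  have hM := hpos i le_rfl
  have hxi : xi m (i + 1) = #(insert (m (i + 1))
      ({y ∈ range (m (i + 1) - 1) | ∀ l < i, m (l + 1) - 1 ≠ y}.image (· + 1))) := by
    rw [xi]
    congr 1
    ext z
    simp only [mem_filter, mem_Icc, mem_Ico, mem_insert, mem_image, mem_range]
    constructor
    · rintro ⟨⟨hz1, hz2⟩, hz⟩
      refine hz2.eq_or_lt.imp id fun hlt => ⟨z - 1, ⟨by omega, fun l hl h => ?_⟩, by omega⟩
      have := hpos l hl.le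
      exact hz (l + 1) ⟨by omega, by omega⟩ (by omega)
    · rintro (rfl | ⟨y, ⟨hy, hyl⟩, rfl⟩)
      · refine ⟨⟨hM, le_rfl⟩, fun l hl => ?_⟩
        obtain ⟨l, rfl⟩ : ∃ l', l = l' + 1 := ⟨l - 1, by omega⟩
        exact hne l (by omega)
      · refine ⟨⟨by omega, by omega⟩, fun l hl h => ?_⟩
        obtain ⟨l, rfl⟩ : ∃ l', l = l' + 1 := ⟨l - 1, by omega⟩
        exact hyl l (by omega) (by omega)
  rw [hxi, card_insert_of_notMem, card_image_of_injective _ (add_left_injective 1), lehmer]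
  simp only [mem_image, mem_filter, mem_range, not_exists, not_and]
  intro y hy h
  omega

lemma prod_Icc_mul_pow_xi {M : Type*} [CommMonoid M] (c q : M) {k : ℕ} {m : ℕ → ℕ}
    (hpos : ∀ i, 1 ≤ i → i ≤ k → 1 ≤ m i)
    (hinj : ∀ i j, 1 ≤ i → i ≤ k → 1 ≤ j → j ≤ k → m i = m j → i = j) :
    ∏ i ∈ Icc 1 k, c * q ^ (xi m i - 1) =
      q ^ (∑ i ∈ range k, lehmer (fun l => m (l + 1) - 1) i) * c ^ k := by
  rw [prod_mul_distrib, prod_const, Nat.card_Icc, Nat.add_sub_cancel, prod_pow_eq_pow_sum,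
    mul_comm, ← Ico_add_one_right_eq_Icc, sum_Ico_eq_sum_range, Nat.add_sub_cancel]
  refine congrArg (q ^ · * c ^ k) (sum_congr rfl fun i hi => ?_)
  have hi := mem_range.mp hi
  rw [add_comm 1 i, xi_succ_eq_lehmer_add_one (fun l hl => hpos _ (by omega) (by omega))
    (fun l hl h => by have := hinj _ _ (by omega) (by omega) (by omega) (by omega) h; omega),
    Nat.add_sub_cancel]

lemma sum_gibbs0_rows_eq {n k : ℕ} {a : ℝ} (b : ℝ) (ha : a ≠ 0) {m : ℕ → ℕ}
    (hpos : ∀ i, 1 ≤ i → i ≤ k → 1 ≤ m i)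
    (hinj : ∀ i j, 1 ≤ i → i ≤ k → 1 ≤ j → j ≤ k → m i = m j → i = j)
    (hkn : k ≤ n) (hmn : ∀ i, 1 ≤ i → i ≤ k → m i ≤ n) :
    ∑ σ : DWBC n,
        (if ∀ j, 1 ≤ j → j ≤ k → rowFinset σ j = (Icc 1 j).image m then gibbs0 n a b σ else 0) =
      (b ^ 2 / a ^ 2) ^ (∑ i ∈ range k, lehmer (fun l => m (l + 1) - 1) i) *
        (mahonian (b ^ 2 / a ^ 2) (n - k) / mahonian (b ^ 2 / a ^ 2) n) := by
  have hv : ∀ i < k, m (i + 1) - 1 < n := fun i hi => by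
    have := hmn (i + 1) (by omega) hi
    omega
  have hvinj : ∀ i < k, ∀ j < k, m (i + 1) - 1 = m (j + 1) - 1 → i = j := fun i hi j hj h => by
    have := hpos (i + 1) (by omega) (by omega)
    have := hpos (j + 1) (by omega) (by omega)
    have := hinj (i + 1) (j + 1) (by omega) (by omega) (by omega) (by omega) (by omega)
    omega
  rw [sum_ite_gibbs0 b ha fun σ => ∀ j, 1 ≤ j → j ≤ k → rowFinset σ j = (Icc 1 j).image m,
    mul_div_assoc', ← prefixMahonian_eq _ hkn hv hvinj, prefixMahonian]
  refine congrArg (· / _) (sum_congr rfl fun π _ => ?_)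
  simp only [rows_permDWBC_eq_image_iff hkn hpos π]

theorem mallows_limit_general (a b : ℝ) (hb : 0 < b) (hab : b < a)
    (k : ℕ) (m : ℕ → ℕ)
    (hpos : ∀ i, 1 ≤ i → i ≤ k → 1 ≤ m i)
    (hinj : ∀ i j, 1 ≤ i → i ≤ k → 1 ≤ j → j ≤ k → m i = m j → i = j) :
    Tendsto
      (fun n : ℕ => ∑ σ : DWBC n,
        if ∀ j, 1 ≤ j → j ≤ k → rowFinset σ j = (Finset.Icc 1 j).image m
        then gibbs0 n a b σ else 0)
      atTop
      (𝓝 (∏ i ∈ Finset.Icc 1 k,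
        (1 - b ^ 2 / a ^ 2) * (b ^ 2 / a ^ 2) ^ (xi m i - 1))) := by
  have ha : 0 < a := hb.trans hab
  have hq1 : b ^ 2 / a ^ 2 < 1 := (div_lt_one (by positivity)).mpr (by nlinarith)
  rw [prod_Icc_mul_pow_xi _ _ hpos hinj]
  refine ((tendsto_mahonian_sub_div_mahonian (by positivity) hq1 k).const_mul _).congr' ?_
  filter_upwards [eventually_ge_atTop (k + ∑ i ∈ Icc 1 k, m i)] with n hn
  refine (sum_gibbs0_rows_eq b ha.ne' hpos hinj (by omega) fun i hi hik => ?_).symm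
  have := single_le_sum (fun i _ => Nat.zero_le (m i)) (mem_Icc.mpr ⟨hi, hik⟩)
  omega

/-- **`q`-exchangeable (Mallows) limit of the six-vertex model with `c = 0`.**
For `a > b > 0` and `q = b²/a²`, under the `c → 0` Gibbs measure on DWBC configurations of
the `n × n` square, for every injective tuple `(m 1, …, m k)` of positive integers the
probability that, for each `1 ≤ j ≤ k`, the `j`-th row of the monotone triangle equals
`{m 1, …, m j}` converges, as `n → ∞`, to `∏_{i=1}^k (1−q) q^{ξ_i − 1}`, with `ξ_i` the
position of `m i` in the increasing enumeration of `ℤ_{>0} ∖ {m 1, …, m (i−1)}`. -/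
theorem mallows_limit (a b : ℝ) (hb : 0 < b) (hab : b < a)
    (k : ℕ) (hk : 1 ≤ k) (m : ℕ → ℕ)
    (hpos : ∀ i, 1 ≤ i → i ≤ k → 1 ≤ m i)
    (hinj : ∀ i j, 1 ≤ i → i ≤ k → 1 ≤ j → j ≤ k → m i = m j → i = j) :
    Tendsto
      (fun n : ℕ => ∑ σ : DWBC n,
        if ∀ j, 1 ≤ j → j ≤ k → rowFinset σ j = (Finset.Icc 1 j).image m
        then gibbs0 n a b σ else 0)
      atTop
      (𝓝 (∏ i ∈ Finset.Icc 1 k,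
        (1 - b ^ 2 / a ^ 2) * (b ^ 2 / a ^ 2) ^ (xi m i - 1))) :=
  mallows_limit_general a b hb hab k m hpos hinj

end SixV
end

section
/- Laplace-transform identity for the disordered-phase weight: for all real t,γ with |t|<γ<π/2, the integral ∫_{−∞}^{∞} e^{tx} · sinh(x(π−2γ)/2)/sinh(πx/2) dx converges absolutely (the integrand being extended by its continuous value (π−2γ)/π at x=0) and equals sin(2γ)/(sin(γ−t)·sin(γ+t)). -/
/-!
Expanding `1 / sinh (π x / 2)` as a geometric series in `e^{-π x}` writes the integrand on
`x > 0` as a series of differences of decaying exponentials with nonnegative terms, so that the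
half-line integral is `∑ₙ (1 / (n π + γ - t) - 1 / ((n + 1) π - γ - t))`. The integral over
`x < 0` is the same series with `t` replaced by `-t`. Regrouping the two series gives the
Mittag-Leffler expansions of `cot (γ - t)` and `cot (γ + t)`, whose sum is
`sin (2 γ) / (sin (γ - t) * sin (γ + t))`.
-/

open MeasureTheory Real Set Filter Topology

section NonnegSeries

variable {α : Type*} [MeasurableSpace α] {μ : Measure α}

theorem integrable_and_hasSum_integral_of_nonneg {F : ℕ → α → ℝ} {f : α → ℝ}
    (hF_nonneg : ∀ n, 0 ≤ᵐ[μ] F n) (hF_int : ∀ n, Integrable (F n) μ)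
    (hF_sum : Summable fun n => ∫ a, F n a ∂μ) (hf : ∀ᵐ a ∂μ, HasSum (fun n => F n a) (f a)) :
    Integrable f μ ∧ HasSum (fun n => ∫ a, F n a ∂μ) (∫ a, f a ∂μ) := by
  have hf_eq : f =ᵐ[μ] fun a => (∑' n, ENNReal.ofReal (F n a)).toReal := by
    filter_upwards [hf, ae_all_iff.2 hF_nonneg] with a ha ha0
    rw [← ENNReal.ofReal_tsum_of_nonneg ha0 ha.summable, ha.tsum_eq,
      ENNReal.toReal_ofReal (ha.nonneg ha0)]
  have hlint : ∫⁻ a, ∑' n, ENNReal.ofReal (F n a) ∂μ = ENNReal.ofReal (∑' n, ∫ a, F n a ∂μ) := by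
    rw [lintegral_tsum fun n => (hF_int n).aemeasurable.ennreal_ofReal,
      ENNReal.ofReal_tsum_of_nonneg (fun n => integral_nonneg_of_ae (hF_nonneg n)) hF_sum]
    exact tsum_congr fun n => (ofReal_integral_eq_lintegral_ofReal (hF_int n) (hF_nonneg n)).symm
  refine ⟨(integrable_toReal_of_lintegral_ne_top (by fun_prop) ?_).congr hf_eq.symm, ?_⟩
  · rw [hlint]
    exact ENNReal.ofReal_ne_top
  · have hF_norm : Summable fun n => ∫ a, ‖F n a‖ ∂μ := by
      refine hF_sum.congr fun n => integral_congr_ae ?_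
      filter_upwards [hF_nonneg n] with a ha using (Real.norm_of_nonneg ha).symm
    rw [integral_congr_ae (hf.mono fun a ha => ha.tsum_eq.symm)]
    exact hasSum_integral_of_summable_integral_norm hF_int hF_norm

end NonnegSeries

theorem hasSum_sub_succ_of_antitone {a : ℕ → ℝ} (ha : Antitone a)
    (h : Tendsto a atTop (𝓝 0)) : HasSum (fun n => a n - a (n + 1)) (a 0) := by
  rw [hasSum_iff_tendsto_nat_of_nonneg (fun n => sub_nonneg.2 (ha n.le_succ))]
  simp_rw [Finset.sum_range_sub']
  simpa using (tendsto_const_nhds (x := a 0)).sub h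

theorem Real.hasSum_cotTerm {x : ℝ} (hx0 : 0 < x) (hx1 : x < 1) :
    HasSum (fun n : ℕ => 1 / (x - (n + 1)) + 1 / (x + (n + 1))) (π * cot (π * x) - 1 / x) := by
  have hx : (x : ℂ) ∈ Complex.integerComplement := by
    rintro ⟨n, hn⟩
    have hn' : (n : ℝ) = x := by exact_mod_cast hn
    have h0 : (0 : ℝ) < n := hn' ▸ hx0
    have h1 : (n : ℝ) < 1 := hn' ▸ hx1
    norm_cast at h0 h1
    omega
  rw [← Complex.hasSum_ofReal]
  push_cast [Complex.ofReal_cot]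
  exact (summable_cotTerm hx).hasSum_iff_tendsto_nat.2 (tendsto_logDeriv_euler_cot_sub hx)

theorem Real.hasSum_cot {u : ℝ} (hu0 : 0 < u) (huπ : u < π) :
    HasSum (fun n : ℕ => 1 / (n * π + u) - 1 / ((n + 1) * π - u)) (cot u) := by
  have hMittagLeffler := (hasSum_cotTerm (div_pos hu0 pi_pos) ((div_lt_one pi_pos).2 huπ)).mul_left
    (1 / π)
  have htelescope := hasSum_sub_succ_of_antitone (a := fun n : ℕ => 1 / (n * π + u))
    (fun m n hmn => one_div_le_one_div_of_le (by positivity) (by gcongr))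
    (tendsto_const_nhds.div_atTop
      (tendsto_atTop_add_const_right _ _ (tendsto_natCast_atTop_atTop.atTop_mul_const pi_pos)))
  have hterm : (fun n : ℕ => 1 / (n * π + u) - 1 / ((n + 1) * π - u)) = fun n : ℕ =>
      1 / π * (1 / (u / π - (n + 1)) + 1 / (u / π + (n + 1))) +
        (1 / (n * π + u) - 1 / ((n + 1 : ℕ) * π + u)) := by
    funext n
    have h1 : π * (n + 1) - u ≠ 0 := by nlinarith [(n.cast_nonneg : (0 : ℝ) ≤ n)]
    have h2 : u - π * (n + 1) ≠ 0 := by contrapose! h1; linarith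
    push_cast
    field_simp
    ring
  have hval : cot u = 1 / π * (π * cot (π * (u / π)) - 1 / (u / π)) + 1 / ((0 : ℕ) * π + u) := by
    rw [mul_div_cancel₀ _ pi_pos.ne']
    field_simp
    ring
  rw [hterm, hval]
  exact hMittagLeffler.add htelescope

theorem Real.hasSum_cot_add_cot {u w : ℝ} (hu0 : 0 < u) (huπ : u < π) (hw0 : 0 < w)
    (hwπ : w < π) :
    HasSum (fun n : ℕ => (1 / (n * π + u) - 1 / ((n + 1) * π - w)) +
      (1 / (n * π + w) - 1 / ((n + 1) * π - u))) (cot u + cot w) := by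
  convert (hasSum_cot hu0 huπ).add (hasSum_cot hw0 hwπ) using 2 with n
  ring

theorem Real.cot_add_cot {u w : ℝ} (hu : sin u ≠ 0) (hw : sin w ≠ 0) :
    cot u + cot w = sin (u + w) / (sin u * sin w) := by
  rw [cot_eq_cos_div_sin, cot_eq_cos_div_sin, sin_add]
  field_simp
  ring

theorem summable_one_div_add_sub_one_div_sub {u w : ℝ} (hu : 0 < u) (hw : 0 < w)
    (huw : u + w ≤ π) : Summable fun n : ℕ => 1 / (n * π + u) - 1 / ((n + 1) * π - w) := by
  have hnonneg : ∀ {a b : ℝ}, 0 < a → a + b ≤ π → ∀ n : ℕ,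
      0 ≤ 1 / (n * π + a) - 1 / ((n + 1) * π - b) := fun ha hab n =>
    sub_nonneg.2 (one_div_le_one_div_of_le (by positivity) (by linarith))
  refine (hasSum_cot_add_cot hu (by linarith) hw (by linarith)).summable.of_nonneg_of_le
    (hnonneg hu huw) fun n => ?_
  linarith [hnonneg hw (by linarith : w + u ≤ π) n]

noncomputable def disorderedWeight (γ x : ℝ) : ℝ :=
  sinh (x * (π - 2 * γ) / 2) / sinh (π * x / 2)

theorem disorderedWeight_neg (γ x : ℝ) : disorderedWeight γ (-x) = disorderedWeight γ x := by
  simp only [disorderedWeight, neg_mul, mul_neg, neg_div, sinh_neg, div_neg, neg_neg]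

theorem hasSum_exp_mul_disorderedWeight (t γ : ℝ) {x : ℝ} (hx : 0 < x) :
    HasSum (fun n : ℕ => exp (-(n * π + (γ - t)) * x) - exp (-((n + 1) * π - (γ + t)) * x))
      (exp (t * x) * disorderedWeight γ x) := by
  have hr : exp (-π * x) < 1 := exp_lt_one_iff.2 (by nlinarith [pi_pos])
  have hgeom := (hasSum_geometric_of_lt_one (exp_pos _).le hr).mul_left
    (exp (t * x) / exp (γ * x) - exp (t * x) * exp (γ * x) * exp (-π * x))
  have hterm : (fun n : ℕ => exp (-(n * π + (γ - t)) * x) - exp (-((n + 1) * π - (γ + t)) * x)) =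
      fun n : ℕ => (exp (t * x) / exp (γ * x) - exp (t * x) * exp (γ * x) * exp (-π * x)) *
        exp (-π * x) ^ n := by
    funext n
    rw [← exp_nat_mul, ← exp_sub, ← exp_add, ← exp_add, sub_mul, ← exp_add, ← exp_add]
    congr 2 <;> ring
  have hp : 1 < exp (π * x / 2) := one_lt_exp_iff.2 (by positivity)
  have hval : exp (t * x) * disorderedWeight γ x =
      (exp (t * x) / exp (γ * x) - exp (t * x) * exp (γ * x) * exp (-π * x)) *
        (1 - exp (-π * x))⁻¹ := by
    have e1 : exp (-π * x) = (exp (π * x / 2) ^ 2)⁻¹ := by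
      rw [← exp_nat_mul, ← exp_neg]; congr 1; push_cast; ring
    have e2 : exp (x * (π - 2 * γ) / 2) = exp (π * x / 2) / exp (γ * x) := by
      rw [← exp_sub]; congr 1; ring
    have e3 : exp (-(x * (π - 2 * γ) / 2)) = exp (γ * x) / exp (π * x / 2) := by
      rw [← exp_sub]; congr 1; ring
    have : exp (π * x / 2) ^ 2 - 1 ≠ 0 := by nlinarith
    have : exp (π * x / 2) - 1 ≠ 0 := by linarith
    rw [disorderedWeight, sinh_eq, sinh_eq, e1, e2, e3, exp_neg]
    field_simp
  rw [hterm, hval]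
  exact hgeom

theorem integral_Ioi_exp_neg_mul_sub {p q : ℝ} (hp : 0 < p) (hq : 0 < q) :
    ∫ x in Ioi 0, (exp (-p * x) - exp (-q * x)) = 1 / p - 1 / q := by
  rw [integral_sub (exp_neg_integrableOn_Ioi 0 hp) (exp_neg_integrableOn_Ioi 0 hq),
    integral_exp_mul_Ioi (neg_lt_zero.2 hp), integral_exp_mul_Ioi (neg_lt_zero.2 hq)]
  simp only [mul_zero, exp_zero]
  ring

theorem integrableOn_Ioi_and_hasSum_integral_exp_mul_disorderedWeight {t γ : ℝ} (h1 : |t| < γ)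
    (h2 : γ < π / 2) :
    IntegrableOn (fun x => exp (t * x) * disorderedWeight γ x) (Ioi 0) ∧
      HasSum (fun n : ℕ => 1 / (n * π + (γ - t)) - 1 / ((n + 1) * π - (γ + t)))
        (∫ x in Ioi 0, exp (t * x) * disorderedWeight γ x) := by
  have hγt : 0 < γ - t := sub_pos.2 (lt_of_abs_lt h1)
  have hp : ∀ n : ℕ, 0 < n * π + (γ - t) := fun n => by positivity
  have hpq : ∀ n : ℕ, n * π + (γ - t) ≤ (n + 1) * π - (γ + t) := fun n => by linarith
  have hq : ∀ n : ℕ, 0 < (n + 1) * π - (γ + t) := fun n => (hp n).trans_le (hpq n)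
  have hint := fun n => integral_Ioi_exp_neg_mul_sub (hp n) (hq n)
  have hsum := summable_one_div_add_sub_one_div_sub hγt (by linarith [neg_abs_le t] : 0 < γ + t)
    (by linarith)
  have h := integrable_and_hasSum_integral_of_nonneg (μ := volume.restrict (Ioi 0))
    (F := fun n x => exp (-(n * π + (γ - t)) * x) - exp (-((n + 1) * π - (γ + t)) * x))
    (fun n => (ae_restrict_iff' measurableSet_Ioi).2 (.of_forall fun x (hx : 0 < x) =>
      sub_nonneg.2 (exp_le_exp.2 (by nlinarith [hpq n]))))
    (fun n => (exp_neg_integrableOn_Ioi 0 (hp n)).sub (exp_neg_integrableOn_Ioi 0 (hq n)))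
    (by simpa only [hint] using hsum)
    ((ae_restrict_iff' measurableSet_Ioi).2 (.of_forall fun x hx =>
      hasSum_exp_mul_disorderedWeight t γ hx))
  exact ⟨h.1, by simpa only [hint] using h.2⟩

theorem integrableOn_Iic_and_hasSum_integral_exp_mul_disorderedWeight {t γ : ℝ} (h1 : |t| < γ)
    (h2 : γ < π / 2) :
    IntegrableOn (fun x => exp (t * x) * disorderedWeight γ x) (Iic 0) ∧
      HasSum (fun n : ℕ => 1 / (n * π + (γ + t)) - 1 / ((n + 1) * π - (γ - t)))
        (∫ x in Iic 0, exp (t * x) * disorderedWeight γ x) := by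
  obtain ⟨hIoi, hsum⟩ := integrableOn_Ioi_and_hasSum_integral_exp_mul_disorderedWeight
    (t := -t) (by rwa [abs_neg]) h2
  have hreflect : (fun x => exp (-t * -x) * disorderedWeight γ (-x)) =
      fun x => exp (t * x) * disorderedWeight γ x := by
    simp only [disorderedWeight_neg, neg_mul_neg]
  have hIci : IntegrableOn (fun x => exp (-t * x) * disorderedWeight γ x) (Ici (-0)) := by
    rw [neg_zero]
    exact (integrableOn_Ici_iff_integrableOn_Ioi enorm_ne_top).2 hIoi
  have hintegral : ∫ x in Iic 0, exp (t * x) * disorderedWeight γ x =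
      ∫ x in Ioi 0, exp (-t * x) * disorderedWeight γ x := by
    have h := integral_comp_neg_Ioi 0 fun x => exp (t * x) * disorderedWeight γ x
    rw [neg_zero] at h
    simp only [← h, disorderedWeight_neg, mul_neg, neg_mul]
  refine ⟨hreflect ▸ hIci.comp_neg_Iic, ?_⟩
  rw [hintegral]
  simpa only [sub_neg_eq_add, ← sub_eq_add_neg] using hsum

/-- Laplace-transform identity for the disordered-phase weight: for `|t| < γ < π/2`,
`∫ e^{tx} · sinh(x(π−2γ)/2)/sinh(πx/2) dx = sin(2γ)/(sin(γ−t)·sin(γ+t))`, the integral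
converging absolutely.  (At `x = 0` the integrand here takes the value `0` rather than its
continuous value `(π−2γ)/π`; this does not affect integrability or the integral.) -/
theorem laplace_transform_disordered_weight (t γ : ℝ) (h1 : |t| < γ) (h2 : γ < π / 2) :
    Integrable (fun x : ℝ => Real.exp (t * x) *
        (Real.sinh (x * (π - 2 * γ) / 2) / Real.sinh (π * x / 2))) ∧
    ∫ x : ℝ, Real.exp (t * x) *
        (Real.sinh (x * (π - 2 * γ) / 2) / Real.sinh (π * x / 2)) =
      Real.sin (2 * γ) / (Real.sin (γ - t) * Real.sin (γ + t)) := by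
  change Integrable (fun x => exp (t * x) * disorderedWeight γ x) ∧
    ∫ x, exp (t * x) * disorderedWeight γ x = _
  obtain ⟨hIoi, hsumIoi⟩ := integrableOn_Ioi_and_hasSum_integral_exp_mul_disorderedWeight h1 h2
  obtain ⟨hIic, hsumIic⟩ := integrableOn_Iic_and_hasSum_integral_exp_mul_disorderedWeight h1 h2
  have hsub : 0 < γ - t := sub_pos.2 (lt_of_abs_lt h1)
  have hadd : 0 < γ + t := by linarith [neg_abs_le t]
  refine ⟨by simpa using hIic.union hIoi, ?_⟩
  rw [← intervalIntegral.integral_Iic_add_Ioi hIic hIoi,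
    show 2 * γ = (γ + t) + (γ - t) by ring, mul_comm (sin _), ← cot_add_cot]
  · exact (hsumIic.add hsumIoi).unique
      (hasSum_cot_add_cot hadd (by linarith) hsub (by linarith))
  all_goals exact (sin_pos_of_pos_of_lt_pi (by assumption) (by linarith)).ne'
end
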